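/- arXiv:2407.12971 — 3 statements merged into one kernel-verified Lean document; each statement's English description precedes it below -/
import Mathlib

section
/- For every real q ≥ 2 and all reals p, h with 0 ≤ p < h, the function Φ(x) = (x^q − p^q)^(1/q) is differentiable at h with Φ′(h) = (1 − (p/h)^q)^(1/q − 1), and moreover Φ′(h) − 1 ≥ (1 − 1/q)·(p/h)^q ≥ 0. -/
/-!
Factoring `h ^ q` out of `h ^ q - p ^ q` turns the chain rule into `Φ′(h) = (1 - t) ^ (1 / q - 1)`
with `t = (p / h) ^ q ∈ [0, 1)`. The lower bound is the tangent-line inequality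
`(1 - t) ^ (-α) ≥ 1 + α t` for `α = 1 - 1 / q ≥ 0`, which follows from `exp x ≥ 1 + x`
and `log (1 - t) ≤ -t`.
-/

open Real

theorem one_add_mul_le_one_sub_rpow_neg {t α : ℝ} (ht : t < 1) (hα : 0 ≤ α) :
    1 + α * t ≤ (1 - t) ^ (-α) := by
  have hlog : log (1 - t) ≤ -t := by linarith [log_le_sub_one_of_pos (sub_pos.mpr ht)]
  calc 1 + α * t ≤ log (1 - t) * -α + 1 := by nlinarith
    _ ≤ exp (log (1 - t) * -α) := add_one_le_exp _
    _ = (1 - t) ^ (-α) := (rpow_def_of_pos (sub_pos.mpr ht) _).symm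

theorem hasDerivAt_rpow_sub_const_rpow_one_div {q c h : ℝ} (hq : q ≠ 0) (hh : 0 < h)
    (hc : c < h ^ q) :
    HasDerivAt (fun x : ℝ => (x ^ q - c) ^ (1 / q)) ((1 - c / h ^ q) ^ (1 / q - 1)) h := by
  have hhq : 0 < h ^ q := rpow_pos_of_pos hh q
  have hinner : HasDerivAt (fun x : ℝ => x ^ q - c) (q * h ^ (q - 1)) h :=
    (hasDerivAt_rpow_const (Or.inl hh.ne')).sub_const c
  have houter := hasDerivAt_rpow_const (x := h ^ q - c) (p := 1 / q) (Or.inl (sub_pos.mpr hc).ne')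
  refine (houter.comp h hinner).congr_deriv ?_
  have hsplit : h ^ q - c = h ^ q * (1 - c / h ^ q) := by field_simp
  have hcancel : (h ^ q) ^ (1 / q - 1) * h ^ (q - 1) = 1 := by
    rw [← rpow_mul hh.le, ← rpow_add hh]
    field_simp
    simp
  rw [hsplit, mul_rpow hhq.le (sub_nonneg.mpr ((div_le_one hhq).mpr hc.le))]
  calc 1 / q * ((h ^ q) ^ (1 / q - 1) * (1 - c / h ^ q) ^ (1 / q - 1)) * (q * h ^ (q - 1))
      = (1 / q * q) * ((h ^ q) ^ (1 / q - 1) * h ^ (q - 1)) * (1 - c / h ^ q) ^ (1 / q - 1) := by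
        ring
    _ = _ := by rw [hcancel, one_div_mul_cancel hq]; ring

/-- For every real `q ≥ 2` and all reals `p, h` with `0 ≤ p < h`, the
function `Φ(x) = (x^q − p^q)^(1/q)` is differentiable at `h` with
`Φ′(h) = (1 − (p/h)^q)^(1/q − 1)`, and moreover
`Φ′(h) − 1 ≥ (1 − 1/q)·(p/h)^q ≥ 0`. -/
theorem stmt_6 (q : ℝ) (hq : 2 ≤ q) (p h : ℝ) (hp : 0 ≤ p) (hph : p < h) :
    HasDerivAt (fun x : ℝ => (x ^ q - p ^ q) ^ (1 / q))
      ((1 - (p / h) ^ q) ^ (1 / q - 1)) h ∧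
    (1 - 1 / q) * (p / h) ^ q ≤ (1 - (p / h) ^ q) ^ (1 / q - 1) - 1 ∧
    0 ≤ (1 - 1 / q) * (p / h) ^ q := by
  have hq0 : 0 < q := by linarith
  have hh : 0 < h := hp.trans_lt hph
  have hratio : (p / h) ^ q < 1 :=
    rpow_lt_one (div_nonneg hp hh.le) ((div_lt_one hh).mpr hph) hq0
  have hα : 0 ≤ 1 - 1 / q := by
    rw [sub_nonneg, div_le_one hq0]; linarith
  refine ⟨?_, ?_, mul_nonneg hα (rpow_nonneg (div_nonneg hp hh.le) q)⟩
  · rw [div_rpow hp hh.le]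
    exact hasDerivAt_rpow_sub_const_rpow_one_div hq0.ne' hh (rpow_lt_rpow hp hph hq0)
  · have := one_add_mul_le_one_sub_rpow_neg hratio hα
    rw [neg_sub] at this
    linarith
end

section
/- Let κ₁, κ₂ be real numbers and set H = κ₁ + κ₂, |A|² = κ₁² + κ₂², tr(A³) = κ₁³ + κ₂³ and |Å|² = |A|² − H²/2. Then |A|⁴ − H·tr(A³) = −2·κ₁·κ₂·|Å|². Moreover, if σ > 0, κ₁ ≥ 1/(2σ), κ₂ ≥ 1/(2σ), and h > 0 satisfies h/H ≥ 1/(2√5), then (4h/H)·(|A|⁴ − H·tr(A³))·|Å|² ≤ −(1/(√5·σ²))·|Å|⁴. -/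
/-- With `H = κ₁ + κ₂`, `|A|² = κ₁² + κ₂²`, `tr(A³) = κ₁³ + κ₂³` and
`|Å|² = |A|² − H²/2`, one has `|A|⁴ − H·tr(A³) = −2κ₁κ₂|Å|²`. Moreover, if `σ > 0`,
`κ₁, κ₂ ≥ 1/(2σ)` and `h > 0` satisfies `h/H ≥ 1/(2√5)`, then
`(4h/H)·(|A|⁴ − H·tr(A³))·|Å|² ≤ −(1/(√5·σ²))·|Å|⁴`. -/
theorem stmt_8 (κ₁ κ₂ : ℝ) :
    (κ₁ ^ 2 + κ₂ ^ 2) ^ 2 - (κ₁ + κ₂) * (κ₁ ^ 3 + κ₂ ^ 3)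
      = -2 * κ₁ * κ₂ * ((κ₁ ^ 2 + κ₂ ^ 2) - (κ₁ + κ₂) ^ 2 / 2) ∧
    ∀ σ h : ℝ, 0 < σ → 1 / (2 * σ) ≤ κ₁ → 1 / (2 * σ) ≤ κ₂ → 0 < h →
      1 / (2 * Real.sqrt 5) ≤ h / (κ₁ + κ₂) →
      (4 * h / (κ₁ + κ₂)) * ((κ₁ ^ 2 + κ₂ ^ 2) ^ 2 - (κ₁ + κ₂) * (κ₁ ^ 3 + κ₂ ^ 3))
          * ((κ₁ ^ 2 + κ₂ ^ 2) - (κ₁ + κ₂) ^ 2 / 2)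
        ≤ -(1 / (Real.sqrt 5 * σ ^ 2)) * ((κ₁ ^ 2 + κ₂ ^ 2) - (κ₁ + κ₂) ^ 2 / 2) ^ 2 := by
  refine ⟨by ring, ?_⟩
  intro σ h hσ h1 h2 hh hratio
  have hs : (0:ℝ) < Real.sqrt 5 := Real.sqrt_pos.mpr (by norm_num)
  have hσ' : (0:ℝ) < 1 / (2 * σ) := by positivity
  have hk1 : 0 < κ₁ := lt_of_lt_of_le hσ' h1
  have hk2 : 0 < κ₂ := lt_of_lt_of_le hσ' h2
  have hH : 0 < κ₁ + κ₂ := by linarith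
  set A : ℝ := (κ₁ ^ 2 + κ₂ ^ 2) - (κ₁ + κ₂) ^ 2 / 2 with hA
  have hA0 : 0 ≤ A := by
    have : A = (κ₁ - κ₂) ^ 2 / 2 := by rw [hA]; ring
    rw [this]; positivity
  have hk12 : 1 / (2 * σ) * (1 / (2 * σ)) ≤ κ₁ * κ₂ :=
    mul_le_mul h1 h2 (le_of_lt hσ') (le_of_lt hk1)
  have key : 1 / (Real.sqrt 5 * σ ^ 2) ≤ 8 * (h / (κ₁ + κ₂)) * (κ₁ * κ₂) := by
    have step : 8 * (1 / (2 * Real.sqrt 5)) * (1 / (2 * σ) * (1 / (2 * σ)))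
        ≤ 8 * (h / (κ₁ + κ₂)) * (κ₁ * κ₂) := by
      apply mul_le_mul (by nlinarith) hk12 (by positivity) (by positivity)
    calc 1 / (Real.sqrt 5 * σ ^ 2)
        = 8 * (1 / (2 * Real.sqrt 5)) * (1 / (2 * σ) * (1 / (2 * σ))) := by
          field_simp; ring
      _ ≤ _ := step
  have hid : (κ₁ ^ 2 + κ₂ ^ 2) ^ 2 - (κ₁ + κ₂) * (κ₁ ^ 3 + κ₂ ^ 3)
      = -2 * κ₁ * κ₂ * A := by rw [hA]; ring
  rw [hid]
  have hgoal : (4 * h / (κ₁ + κ₂)) * (-2 * κ₁ * κ₂ * A) * A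
      = -(8 * (h / (κ₁ + κ₂)) * (κ₁ * κ₂)) * A ^ 2 := by ring
  rw [hgoal]
  have := mul_le_mul_of_nonneg_right key (sq_nonneg A)
  linarith
end

section
/- Let (X, d) be a metric space equipped with a Borel measure μ, let L > 0, and let f : X → ℝ be Borel measurable with f² μ-integrable and satisfy |f(x) − f(y)| ≤ L·(d(x, y))^(1/2) for all x, y ∈ X. Suppose x₀ ∈ X satisfies |f(x₀)| = M where M > 0 and |f(x)| ≤ M for all x ∈ X. Then ∫_X f² dμ ≥ (M²/4)·μ(closedBall(x₀, M²/(4L²))). In particular, if μ(closedBall(x₀, M²/(4L²))) ≥ 4π·(M²/(4L²))², then ∫_X f² dμ ≥ (π/(16·L⁴))·M⁶. -/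
/-!
By the ½-Hölder bound, `|f|` stays above `M / 2` on the ball of radius `r = M² / (4L²)`
around `x₀`, so Chebyshev's inequality for `f²` gives `∫ f² ≥ (M² / 4) μ(B(x₀, r))`;
the second bound is this one with `μ(B(x₀, r)) ≥ 4π r²` substituted.
-/

open MeasureTheory

section Chebyshev

variable {α : Type*} [MeasurableSpace α] {μ : Measure α} {g : α → ℝ} {s : Set α} {c : ℝ}

lemma measure_lt_top_of_le_on (hg : Integrable g μ) (hc : 0 < c) (hs : ∀ x ∈ s, c ≤ g x) :
    μ s < ⊤ :=
  (measure_mono hs).trans_lt (hg.measure_ge_lt_top hc)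

lemma mul_measureReal_le_integral_of_le_on (hg₀ : 0 ≤ g) (hg : Integrable g μ) (hc : 0 < c)
    (hs : ∀ x ∈ s, c ≤ g x) : c * μ.real s ≤ ∫ x, g x ∂μ :=
  calc c * μ.real s ≤ c * μ.real {x | c ≤ g x} := by
        gcongr
        exacts [(hg.measure_ge_lt_top hc).ne, hs]
    _ ≤ ∫ x, g x ∂μ := mul_meas_ge_le_integral_of_nonneg (.of_forall hg₀) hg c

end Chebyshev

section Holder

variable {X : Type*} [MetricSpace X] {f : X → ℝ} {L : ℝ}

lemma abs_sub_mul_sqrt_le_abs_of_mem_closedBall (hL : 0 ≤ L)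
    (hf : ∀ x y : X, |f x - f y| ≤ L * dist x y ^ ((1 : ℝ) / 2)) {x₀ x : X} {r : ℝ}
    (hx : x ∈ Metric.closedBall x₀ r) : |f x₀| - L * √r ≤ |f x| := by
  have hdist : √(dist x₀ x) ≤ √r := Real.sqrt_le_sqrt (by rwa [dist_comm])
  have := hf x₀ x
  rw [← Real.sqrt_eq_rpow] at this
  linarith [abs_sub_abs_le_abs_sub (f x₀) (f x), mul_le_mul_of_nonneg_left hdist hL]

lemma sq_div_four_le_sq_of_mem_closedBall (hL : 0 < L)
    (hf : ∀ x y : X, |f x - f y| ≤ L * dist x y ^ ((1 : ℝ) / 2)) {x₀ x : X}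
    (hx : x ∈ Metric.closedBall x₀ (|f x₀| ^ 2 / (4 * L ^ 2))) :
    |f x₀| ^ 2 / 4 ≤ f x ^ 2 := by
  have hsqrt : √(|f x₀| ^ 2 / (4 * L ^ 2)) = |f x₀| / (2 * L) := by
    rw [show |f x₀| ^ 2 / (4 * L ^ 2) = (|f x₀| / (2 * L)) ^ 2 by ring,
      Real.sqrt_sq (by positivity)]
  have hhalf : |f x₀| / 2 ≤ |f x| := by
    have := abs_sub_mul_sqrt_le_abs_of_mem_closedBall hL.le hf hx
    rw [hsqrt, mul_div_left_comm, div_mul_cancel_right₀ hL.ne'] at this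
    linarith
  rw [← sq_abs (f x)]
  nlinarith [abs_nonneg (f x₀)]

end Holder

theorem stmt_12_general {X : Type*} [MetricSpace X] [MeasurableSpace X]
    (μ : Measure X) (L : ℝ) (hL : 0 < L)
    (f : X → ℝ)
    (hint : Integrable (fun x => f x ^ 2) μ)
    (hHolder : ∀ x y : X, |f x - f y| ≤ L * dist x y ^ ((1 : ℝ) / 2))
    (x₀ : X) (M : ℝ) (hM : 0 < M) (hx₀ : |f x₀| = M) :
    (M ^ 2 / 4) * (μ (Metric.closedBall x₀ (M ^ 2 / (4 * L ^ 2)))).toReal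
        ≤ ∫ x, f x ^ 2 ∂μ ∧
    (ENNReal.ofReal (4 * Real.pi * (M ^ 2 / (4 * L ^ 2)) ^ 2)
        ≤ μ (Metric.closedBall x₀ (M ^ 2 / (4 * L ^ 2))) →
      Real.pi / (16 * L ^ 4) * M ^ 6 ≤ ∫ x, f x ^ 2 ∂μ) := by
  set r := M ^ 2 / (4 * L ^ 2) with hr
  have hball : ∀ x ∈ Metric.closedBall x₀ r, M ^ 2 / 4 ≤ f x ^ 2 := fun x hx => by
    subst hx₀
    exact sq_div_four_le_sq_of_mem_closedBall hL hHolder hx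
  have hc : (0 : ℝ) < M ^ 2 / 4 := by positivity
  have hbound : M ^ 2 / 4 * μ.real (Metric.closedBall x₀ r) ≤ ∫ x, f x ^ 2 ∂μ :=
    mul_measureReal_le_integral_of_le_on (fun x => sq_nonneg (f x)) hint hc hball
  refine ⟨hbound, fun hμ => le_trans ?_ hbound⟩
  have hvol : 4 * Real.pi * r ^ 2 ≤ μ.real (Metric.closedBall x₀ r) :=
    (ENNReal.ofReal_le_iff_le_toReal (measure_lt_top_of_le_on hint hc hball).ne).1 hμ
  calc Real.pi / (16 * L ^ 4) * M ^ 6 = M ^ 2 / 4 * (4 * Real.pi * r ^ 2) := by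
        rw [hr]
        field_simp
        ring
    _ ≤ M ^ 2 / 4 * μ.real (Metric.closedBall x₀ r) := by gcongr

/-- Let `(X, d)` be a metric space with a Borel measure `μ`, `L > 0`,
and `f : X → ℝ` Borel measurable with `f²` integrable and
`|f(x) − f(y)| ≤ L·d(x,y)^(1/2)`. If `x₀` satisfies `|f(x₀)| = M` with `M > 0` and
`|f(x)| ≤ M` for all `x`, then `∫ f² dμ ≥ (M²/4)·μ(closedBall(x₀, M²/(4L²)))`; in
particular if `μ(closedBall(x₀, M²/(4L²))) ≥ 4π·(M²/(4L²))²`, then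
`∫ f² dμ ≥ (π/(16L⁴))·M⁶`. -/
theorem stmt_12 {X : Type*} [MetricSpace X] [MeasurableSpace X] [BorelSpace X]
    (μ : Measure X) (L : ℝ) (hL : 0 < L)
    (f : X → ℝ) (hf : Measurable f)
    (hint : Integrable (fun x => f x ^ 2) μ)
    (hHolder : ∀ x y : X, |f x - f y| ≤ L * dist x y ^ ((1 : ℝ) / 2))
    (x₀ : X) (M : ℝ) (hM : 0 < M) (hx₀ : |f x₀| = M) (hbd : ∀ x, |f x| ≤ M) :
    (M ^ 2 / 4) * (μ (Metric.closedBall x₀ (M ^ 2 / (4 * L ^ 2)))).toReal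
        ≤ ∫ x, f x ^ 2 ∂μ ∧
    (ENNReal.ofReal (4 * Real.pi * (M ^ 2 / (4 * L ^ 2)) ^ 2)
        ≤ μ (Metric.closedBall x₀ (M ^ 2 / (4 * L ^ 2))) →
      Real.pi / (16 * L ^ 4) * M ^ 6 ≤ ∫ x, f x ^ 2 ∂μ) :=
  stmt_12_general μ L hL f hint hHolder x₀ M hM hx₀
end
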